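/- Let m, n ≥ 2 and let G be the m×n grid graph. Every graph homomorphism from G to G that fixes the four corners (0,0), (0,n−1), (m−1,0), (m−1,n−1) is the identity map on the vertices of G. -/

import Mathlib

open Set

/-- A relational structure over vocabulary `σ` (with arities `ar`) and universe `A`. -/
structure RelStruct (σ : Type) (ar : σ → ℕ) (A : Type) where
  rel : ∀ R : σ, Set (Fin (ar R) → A)

variable {σ : Type} {ar : σ → ℕ} {A B : Type}

/-- `h` is a homomorphism from `𝒜` to `ℬ`. -/
def IsHom (𝒜 : RelStruct σ ar A) (ℬ : RelStruct σ ar B) (h : A → B) : Prop :=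
  ∀ R : σ, ∀ t ∈ 𝒜.rel R, (fun i => h (t i)) ∈ ℬ.rel R

/-- `𝒜^ℬ[X]`: the set of restrictions to `X` of homomorphisms from `𝒜` to `ℬ`. -/
def homRestrict (𝒜 : RelStruct σ ar A) (ℬ : RelStruct σ ar B) (X : Set A) :
    Set (↥X → B) :=
  { g | ∃ h : A → B, IsHom 𝒜 ℬ h ∧ g = X.restrict h }

/-- `𝒜'` is a (relation-wise) substructure of `𝒜`. -/
def SubStructOf (𝒜' 𝒜 : RelStruct σ ar A) : Prop :=
  ∀ R : σ, 𝒜'.rel R ⊆ 𝒜.rel R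

/-- `𝒜'` is a core of `𝒜`. -/
def IsCoreOf (𝒜' 𝒜 : RelStruct σ ar A) : Prop :=
  SubStructOf 𝒜' 𝒜 ∧ (∃ h : A → A, IsHom 𝒜 𝒜' h) ∧
    ∀ 𝒜'' : RelStruct σ ar A, SubStructOf 𝒜'' 𝒜' → 𝒜'' ≠ 𝒜' →
      ¬ ∃ h : A → A, IsHom 𝒜 𝒜'' h

/-- `X` is domain restricted in `𝒜`, with (unary) domain-constraint symbol `dR`. -/
def DomRestricted (𝒜 : RelStruct σ ar A) (dR : σ) (X : A) : Prop :=
  ar dR = 1 ∧ 𝒜.rel dR = {fun _ => X}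

/-- A view structure (v-structure) for `𝒜`, over the vocabulary `ν` of views:
each view `v` has a set of variables (the entries of its single defining tuple),
and every constraint of `𝒜` has a base view. -/
structure ViewStruct (σ : Type) (ar : σ → ℕ) (A : Type) (𝒜 : RelStruct σ ar A)
    (ν : Type) where
  vars : ν → Set A
  base : ∀ R : σ, ∀ t : Fin (ar R) → A, t ∈ 𝒜.rel R → ν
  base_vars : ∀ R t ht, vars (base R t ht) = Set.range t

variable {ν : Type} {𝒜 : RelStruct σ ar A}

/-- Restriction of an assignment on `W` to a subset `S ⊆ W`. -/
def restr {W S : Set A} (hSW : S ⊆ W) (g : ↥W → B) : ↥S → B :=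
  fun x => g ⟨x.1, hSW x.2⟩

/-- `BV` (a τ_V-structure, given as a set of assignments for each view) is legal
w.r.t. `V` and the instance `(𝒜,ℬ)`. -/
def Legal (𝒜 : RelStruct σ ar A) (ℬ : RelStruct σ ar B)
    (V : ViewStruct σ ar A 𝒜 ν) (BV : ∀ v : ν, Set (↥(V.vars v) → B)) : Prop :=
  (∀ v : ν, homRestrict 𝒜 ℬ (V.vars v) ⊆ BV v) ∧
  (∀ (R : σ) (t : Fin (ar R) → A) (ht : t ∈ 𝒜.rel R),
     ∀ g ∈ BV (V.base R t ht),
       (fun i => g ⟨t i, by rw [V.base_vars]; exact Set.mem_range_self i⟩) ∈ ℬ.rel R)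

/-- Pairwise consistency of a family of view relations w.r.t. `V`. -/
def PWConsistent (V : ViewStruct σ ar A 𝒜 ν)
    (BV' : ∀ v : ν, Set (↥(V.vars v) → B)) : Prop :=
  ∀ v1 v2 : ν, (V.vars v1 ∩ V.vars v2).Nonempty →
    restr Set.inter_subset_left '' BV' v1 = restr Set.inter_subset_right '' BV' v2

/-- `GAC V BV`: the largest pairwise consistent sub-structure of `BV`
(defined as the union of all pairwise consistent sub-structures). -/
def GAC (V : ViewStruct σ ar A 𝒜 ν) (BV : ∀ v : ν, Set (↥(V.vars v) → B)) :
    ∀ v : ν, Set (↥(V.vars v) → B) :=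
  fun v => { g | ∃ BV' : ∀ w : ν, Set (↥(V.vars w) → B),
    (∀ w, BV' w ⊆ BV w) ∧ PWConsistent V BV' ∧ g ∈ BV' v }

/-- `h` is a homomorphism from the v-structure `𝒜_V` to `ℬ_V` (reading the single
tuple of each view as an assignment). -/
def IsViewHom (V : ViewStruct σ ar A 𝒜 ν) (BV : ∀ v : ν, Set (↥(V.vars v) → B))
    (h : A → B) : Prop :=
  ∀ v : ν, (V.vars v).restrict h ∈ BV v

/-- The hyperedges of the hypergraph `ℋ_𝒜` of a structure `𝒜`. -/
def structEdges (𝒜 : RelStruct σ ar A) : Set (Set A) :=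
  { e | ∃ (R : σ) (t : Fin (ar R) → A), t ∈ 𝒜.rel R ∧ e = Set.range t }

/-- The hyperedges of the hypergraph `ℋ_{𝒜_V}` of a v-structure. -/
def viewEdges (V : ViewStruct σ ar A 𝒜 ν) : Set (Set A) := Set.range V.vars

/-- `H1 ≤ H2`: every hyperedge of `H1` is contained in some hyperedge of `H2`. -/
def HypLE (H1 H2 : Set (Set A)) : Prop := ∀ e ∈ H1, ∃ e' ∈ H2, e ⊆ e'

/-- `T` is a join tree of the hypergraph with hyperedges `H`. -/
def IsJoinTree (H : Set (Set A)) (T : SimpleGraph ↥H) : Prop :=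
  T.IsTree ∧ ∀ (X : A) (e1 e2 : ↥H), X ∈ (e1 : Set A) → X ∈ (e2 : Set A) →
    ∀ p : T.Walk e1 e2, p.IsPath → ∀ e ∈ p.support, X ∈ (e : Set A)

/-- A hypergraph is acyclic iff it has a join tree. -/
def AcyclicHyp (H : Set (Set A)) : Prop := ∃ T : SimpleGraph ↥H, IsJoinTree H T

/-- `(H1, H2)` has a tree projection. -/
def HasTreeProjection (H1 H2 : Set (Set A)) : Prop :=
  ∃ Ha : Set (Set A), AcyclicHyp Ha ∧ HypLE H1 Ha ∧ HypLE Ha H2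

/-- `𝒜 ⊎ 𝕊_O`, where the single tuple `t` (of length `r`) enumerates `O`. -/
def addRel (𝒜 : RelStruct σ ar A) (r : ℕ) (t : Fin r → A) :
    RelStruct (σ ⊕ Unit) (Sum.elim ar fun _ => r) A where
  rel := fun R => match R with
    | Sum.inl R => 𝒜.rel R
    | Sum.inr _ => {t}

/-- `𝒜 ⊎ ⨄_{X ∈ O} 𝕊_{{X}}`. -/
def addSingles (𝒜 : RelStruct σ ar A) (O : Set A) :
    RelStruct (σ ⊕ ↥O) (Sum.elim ar fun _ => 1) A where
  rel := fun R => match R with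
    | Sum.inl R => 𝒜.rel R
    | Sum.inr X => {fun _ => (X : A)}

/-- `O` is tp-covered in the v-structure `V`. -/
def TpCovered (V : ViewStruct σ ar A 𝒜 ν) (O : Set A) : Prop :=
  ∃ (r : ℕ) (t : Fin r → A), Function.Injective t ∧ Set.range t = O ∧
    ∃ 𝒜' : RelStruct (σ ⊕ Unit) (Sum.elim ar fun _ => r) A,
      IsCoreOf 𝒜' (addRel 𝒜 r t) ∧
      HasTreeProjection (structEdges 𝒜') (viewEdges V)

/-- The assignments on `W` that satisfy all constraints of `𝒜` whose variables
all lie in `W` (interpreted in `ℬ`). -/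
def solsOn (𝒜 : RelStruct σ ar A) (ℬ : RelStruct σ ar B) (W : Set A) :
    Set (↥W → B) :=
  { g | ∀ (R : σ) (t : Fin (ar R) → A), t ∈ 𝒜.rel R →
      ∀ hsub : ∀ i, t i ∈ W, (fun i => g ⟨t i, hsub i⟩) ∈ ℬ.rel R }

/-- The constraints of `𝒜`. -/
def Cst (𝒜 : RelStruct σ ar A) : Type := Σ R : σ, {t : Fin (ar R) → A // t ∈ 𝒜.rel R}

/-- The variables of a constraint. -/
def cstVars (c : Cst 𝒜) : Set A := Set.range c.2.1

/-- Index type for the views of `ℓ-tw_k`: the nonempty sets of at most `k` variables. -/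
def twIdx (A : Type) (k : ℕ) : Type := {W : Set A // W.Nonempty ∧ W.Finite ∧ W.ncard ≤ k}

/-- The v-structure `ℓ-tw_k(𝒜)`. -/
def twViews (𝒜 : RelStruct σ ar A) (k : ℕ) :
    ViewStruct σ ar A 𝒜 (twIdx A k ⊕ Cst 𝒜) where
  vars := Sum.elim (fun W => W.1) cstVars
  base := fun R t ht => Sum.inr ⟨R, ⟨t, ht⟩⟩
  base_vars := fun _ _ _ => rfl

/-- The legal structure `r-tw_k(𝒜,ℬ)`. -/
def rtw (𝒜 : RelStruct σ ar A) (ℬ : RelStruct σ ar B) (k : ℕ) :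
    ∀ v : twIdx A k ⊕ Cst 𝒜, Set (↥((twViews 𝒜 k).vars v) → B) :=
  fun v => solsOn 𝒜 ℬ ((twViews 𝒜 k).vars v)

/-- Index type for the views of `ℓ-hw_k`: nonempty sets of at most `k` constraints. -/
def hwIdx (𝒜 : RelStruct σ ar A) (k : ℕ) : Type :=
  {C : Finset (Cst 𝒜) // C.Nonempty ∧ C.card ≤ k}

/-- The variables occurring in a set of constraints. -/
def hwVars (C : Finset (Cst 𝒜)) : Set A := ⋃ c ∈ C, cstVars c

/-- The v-structure `ℓ-hw_k(𝒜)` (for `k ≥ 1`). -/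
def hwViews (𝒜 : RelStruct σ ar A) (k : ℕ) (hk : 1 ≤ k) :
    ViewStruct σ ar A 𝒜 (hwIdx 𝒜 k) where
  vars := fun C => hwVars C.1
  base := fun R t ht => ⟨{⟨R, ⟨t, ht⟩⟩}, Finset.singleton_nonempty _, (Finset.card_singleton _).trans_le hk⟩
  base_vars := fun R t ht => by erw [hwVars, Finset.set_biUnion_singleton]; rfl

/-- The legal structure `r-hw_k(𝒜,ℬ)`: each view holds the solutions of its subproblem. -/
def rhw (𝒜 : RelStruct σ ar A) (ℬ : RelStruct σ ar B) (k : ℕ) (hk : 1 ≤ k) :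
    ∀ C : hwIdx 𝒜 k, Set (↥((hwViews 𝒜 k hk).vars C) → B) :=
  fun C => { g | ∀ (c : Cst 𝒜) (hc : c ∈ C.1),
    (fun i => g ⟨c.2.1 i, Set.mem_iUnion₂.mpr ⟨c, hc, Set.mem_range_self i⟩⟩) ∈ ℬ.rel c.1 }

/-- Replace the relation of symbol `dR` in `ℬ` by `s`. -/
noncomputable def replaceRel (ℬ : RelStruct σ ar B) (dR : σ)
    (s : Set (Fin (ar dR) → B)) : RelStruct σ ar B :=
  letI := Classical.decEq σ
  ⟨Function.update ℬ.rel dR s⟩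

/-- Replace the relation of view `v0` by `s`. -/
noncomputable def updateView (V : ViewStruct σ ar A 𝒜 ν)
    (BV : ∀ v : ν, Set (↥(V.vars v) → B)) (v0 : ν) (s : Set (↥(V.vars v0) → B)) :
    ∀ v : ν, Set (↥(V.vars v) → B) :=
  letI := Classical.decEq ν
  Function.update BV v0 s

/-- The Gaifman graph of a structure. -/
def gaifman (𝒜 : RelStruct σ ar A) : SimpleGraph A where
  Adj u v := u ≠ v ∧ ∃ (R : σ) (t : Fin (ar R) → A),
      t ∈ 𝒜.rel R ∧ u ∈ Set.range t ∧ v ∈ Set.range t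
  symm := ⟨fun u v h => ⟨h.1.symm, by obtain ⟨-, R, t, ht, hu, hv⟩ := h; exact ⟨R, t, ht, hv, hu⟩⟩⟩
  loopless := ⟨fun u h => h.1 rfl⟩

/-- The `m × n` grid graph. -/
def gridGraph (m n : ℕ) : SimpleGraph (Fin m × Fin n) where
  Adj u v := Nat.dist u.1.1 v.1.1 + Nat.dist u.2.1 v.2.1 = 1
  symm := by constructor; intro u v h; simpa [Nat.dist_comm] using h
  loopless := by constructor; intro u h; simp [Nat.dist_self] at h

/-- Two nodes share a hyperedge of `H`. -/
def sharesEdge (H : Set (Set A)) (u w : A) : Prop := ∃ e ∈ H, u ∈ e ∧ w ∈ e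

/-- The hypergraph with hyperedges `H` is connected (over the whole universe). -/
def HypConnected (H : Set (Set A)) : Prop :=
  ∀ x y : A, Relation.ReflTransGen (sharesEdge H) x y

/-!
A graph homomorphism does not increase graph distance, and distance in the grid, the box product
of two paths, is the ℓ¹ distance. Hence `f v` is no farther than `v` from each corner. For every
vertex the distances to two opposite corners add up to `(m - 1) + (n - 1)`, so all four
inequalities are equalities, and the distances to the four corners determine the vertex.
-/

namespace SimpleGraph

variable {V W : Type*} {G : SimpleGraph V}

theorem Hom.edist_map_le {G' : SimpleGraph W} (f : G →g G') (u v : V) :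
    G'.edist (f u) (f v) ≤ G.edist u v := by
  by_cases h : G.Reachable u v
  · obtain ⟨p, hp⟩ := h.exists_walk_length_eq_edist
    calc G'.edist (f u) (f v) ≤ (p.map f).length := edist_le _
      _ = G.edist u v := by rw [Walk.length_map, hp]
  · simp [edist_eq_top_of_not_reachable h]

theorem potential_le_edist (δ : V → V → ℕ) (h_self : ∀ v, δ v v = 0)
    (h_adj : ∀ u w v, G.Adj u w → δ u v ≤ δ w v + 1) (u v : V) :
    (δ u v : ℕ∞) ≤ G.edist u v := by
  have le_length : ∀ {u} (p : G.Walk u v), δ u v ≤ p.length := by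
    intro u p
    induction p with
    | nil => simp [h_self]
    | cons huw _ ih => exact (h_adj _ _ _ huw).trans (by simpa using ih)
  by_cases h : G.Reachable u v
  · obtain ⟨p, hp⟩ := h.exists_walk_length_eq_edist
    rw [← hp]
    exact_mod_cast le_length p
  · simp [edist_eq_top_of_not_reachable h]

theorem edist_le_potential (δ : V → V → ℕ)
    (h_step : ∀ u v, u ≠ v → ∃ w, G.Adj u w ∧ δ w v < δ u v) (u v : V) :
    G.edist u v ≤ δ u v := by
  induction hk : δ u v using Nat.strong_induction_on generalizing u with
  | _ k ih =>
    obtain rfl | hne := eq_or_ne u v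
    · simp
    obtain ⟨w, huw, hw⟩ := h_step u v hne
    calc G.edist u v ≤ G.edist u w + G.edist w v := G.edist_triangle
      _ ≤ 1 + (δ w v : ℕ∞) := by
        rw [edist_eq_one_iff_adj.mpr huw]
        gcongr
        exact ih _ (hk ▸ hw) w rfl
      _ ≤ k := by rw [← hk]; exact_mod_cast (by omega : 1 + δ w v ≤ δ u v)

theorem pathGraph_edist {k : ℕ} (a b : Fin k) : (pathGraph k).edist a b = Nat.dist a b := by
  refine le_antisymm (edist_le_potential (fun a b : Fin k => Nat.dist a b) ?_ a b)
    (potential_le_edist (fun a b : Fin k => Nat.dist a b) (fun _ => Nat.dist_self _) ?_ a b)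
  · intro a b hab
    rcases Fin.lt_or_lt_of_ne hab with hlt | hgt
    · refine ⟨⟨a + 1, by omega⟩, by simp [pathGraph_adj], ?_⟩
      simp only [Nat.dist]
      omega
    · refine ⟨⟨a - 1, by omega⟩, by simp [pathGraph_adj]; omega, ?_⟩
      simp only [Nat.dist]
      omega
  · intro a c b hac
    rw [pathGraph_adj] at hac
    simp only [Nat.dist]
    omega

end SimpleGraph

open SimpleGraph

theorem gridGraph_eq_boxProd (m n : ℕ) : gridGraph m n = pathGraph m □ pathGraph n := by
  ext u v
  simp only [gridGraph, boxProd_adj, pathGraph_adj, Nat.dist, Fin.ext_iff]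
  omega

theorem gridGraph_edist {m n : ℕ} (u v : Fin m × Fin n) :
    (gridGraph m n).edist u v = Nat.dist u.1 v.1 + Nat.dist u.2 v.2 := by
  rw [gridGraph_eq_boxProd, edist_boxProd, pathGraph_edist, pathGraph_edist]

theorem gridGraph_dist_map_le {m n : ℕ} (f : gridGraph m n →g gridGraph m n)
    (u v : Fin m × Fin n) :
    Nat.dist (f u).1 (f v).1 + Nat.dist (f u).2 (f v).2 ≤ Nat.dist u.1 v.1 + Nat.dist u.2 v.2 := by
  have := f.edist_map_le u v
  rw [gridGraph_edist, gridGraph_edist] at this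
  exact_mod_cast this

/-- every graph homomorphism of the `m × n` grid to itself that
fixes the four corners is the identity. -/
theorem statement13 (m n : ℕ) (hm : 2 ≤ m) (hn : 2 ≤ n)
    (f : gridGraph m n →g gridGraph m n)
    (h₁ : f (⟨0, by omega⟩, ⟨0, by omega⟩) = (⟨0, by omega⟩, ⟨0, by omega⟩))
    (h₂ : f (⟨0, by omega⟩, ⟨n - 1, by omega⟩) = (⟨0, by omega⟩, ⟨n - 1, by omega⟩))
    (h₃ : f (⟨m - 1, by omega⟩, ⟨0, by omega⟩) = (⟨m - 1, by omega⟩, ⟨0, by omega⟩))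
    (h₄ : f (⟨m - 1, by omega⟩, ⟨n - 1, by omega⟩) = (⟨m - 1, by omega⟩, ⟨n - 1, by omega⟩)) :
    ∀ v : Fin m × Fin n, f v = v := by
  intro v
  have hd₁ := gridGraph_dist_map_le f v (⟨0, by omega⟩, ⟨0, by omega⟩)
  have hd₂ := gridGraph_dist_map_le f v (⟨0, by omega⟩, ⟨n - 1, by omega⟩)
  have hd₃ := gridGraph_dist_map_le f v (⟨m - 1, by omega⟩, ⟨0, by omega⟩)
  have hd₄ := gridGraph_dist_map_le f v (⟨m - 1, by omega⟩, ⟨n - 1, by omega⟩)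
  rw [h₁] at hd₁
  rw [h₂] at hd₂
  rw [h₃] at hd₃
  rw [h₄] at hd₄
  have hfv₁ := (f v).1.isLt
  have hfv₂ := (f v).2.isLt
  simp only [Nat.dist] at hd₁ hd₂ hd₃ hd₄
  ext <;> omega
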